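/- Let S be a Cu-semigroup satisfying O5 and O6, let λ ∈ F(S) be a functional for which S satisfies Edwards' condition, and let x, y ∈ S. Then there exists z ∈ S with z ≤ x, z ≤ y, and (x̂ ∧ ŷ)(λ) = λ(z); that is, the supremum in Edwards' condition is attained. Moreover, given z₀' ≪ z₀ ≤ x, y, the element z can be chosen with z₀' ≪ z. -/

import Mathlib

open scoped ENNReal

namespace CuFormal

variable {S : Type*} [AddCommMonoid S] [PartialOrder S]

/-- The algebra-free way-below relation: `x ≪ y` iff whenever `y ≤ sup yₙ` for an
increasing sequence with supremum, then `x ≤ yₙ` for some `n`. -/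
def WayBelow (x y : S) : Prop :=
  ∀ f : ℕ → S, Monotone f → ∀ s : S, IsLUB (Set.range f) s → y ≤ s → ∃ n, x ≤ f n

/-- Positively ordered monoid with addition monotone. -/
def PosOrdered : Prop :=
  (∀ x : S, (0 : S) ≤ x) ∧ ∀ a b c : S, b ≤ c → a + b ≤ a + c

/-- O1: every increasing sequence has a supremum. -/
def AxO1 : Prop := ∀ f : ℕ → S, Monotone f → ∃ s : S, IsLUB (Set.range f) s

/-- O2: every element is the supremum of a ≪-increasing sequence. -/
def AxO2 : Prop := ∀ x : S, ∃ f : ℕ → S, Monotone f ∧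
  (∀ n, WayBelow (f n) (f (n + 1))) ∧ IsLUB (Set.range f) x

/-- O3 -/
def AxO3 : Prop := ∀ x₁ y₁ x₂ y₂ : S,
  WayBelow x₁ y₁ → WayBelow x₂ y₂ → WayBelow (x₁ + x₂) (y₁ + y₂)

/-- O4 -/
def AxO4 : Prop := ∀ f g : ℕ → S, Monotone f → Monotone g →
  ∀ a b : S, IsLUB (Set.range f) a → IsLUB (Set.range g) b →
    IsLUB (Set.range fun n => f n + g n) (a + b)

/-- A Cu-semigroup: positively ordered monoid satisfying O1–O4. -/
def CuSemigroup : Prop :=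
  PosOrdered (S := S) ∧ AxO1 (S := S) ∧ AxO2 (S := S) ∧ AxO3 (S := S) ∧ AxO4 (S := S)

/-- O5 -/
def AxO5 : Prop := ∀ x' x y w' w : S, WayBelow x' x → x ≤ y → WayBelow w' w →
  x + w ≤ y → ∃ z : S, x' + z ≤ y ∧ y ≤ x + z ∧ WayBelow w' z

/-- O6 -/
def AxO6 : Prop := ∀ x' x y z : S, WayBelow x' x → x ≤ y + z →
  ∃ y' z' : S, x' ≤ y' + z' ∧ y' ≤ x ∧ y' ≤ y ∧ z' ≤ x ∧ z' ≤ z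

/-- O7 -/
def AxO7 : Prop := ∀ x₁' x₁ x₂' x₂ w : S,
  WayBelow x₁' x₁ → x₁ ≤ w → WayBelow x₂' x₂ → x₂ ≤ w →
  ∃ x : S, WayBelow x₁' x ∧ WayBelow x₂' x ∧ x ≤ w ∧ x ≤ x₁ + x₂

/-- An ideal: a downward hereditary subsemigroup closed under suprema of increasing
sequences. -/
def IsIdeal (J : Set S) : Prop :=
  (0 : S) ∈ J ∧ (∀ x y : S, x ∈ J → y ∈ J → x + y ∈ J) ∧
  (∀ x y : S, y ∈ J → x ≤ y → x ∈ J) ∧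
  (∀ f : ℕ → S, Monotone f → (∀ n, f n ∈ J) →
    ∀ s : S, IsLUB (Set.range f) s → s ∈ J)

/-- Countably based. -/
def CountablyBased : Prop := ∃ B : Set S, B.Countable ∧
  ∀ x : S, ∃ f : ℕ → S, (∀ n, f n ∈ B) ∧ Monotone f ∧
    (∀ n, WayBelow (f n) (f (n + 1))) ∧ IsLUB (Set.range f) x

/-- A functional on `S`: preserves `0`, addition, order and suprema of increasing
sequences. -/
def IsFunctional (l : S → ℝ≥0∞) : Prop :=
  l 0 = 0 ∧ (∀ x y : S, l (x + y) = l x + l y) ∧ Monotone l ∧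
  (∀ f : ℕ → S, Monotone f → ∀ s : S, IsLUB (Set.range f) s → l s = ⨆ n, l (f n))

/-- `(x̂ ∧ ŷ)(λ) = inf { λ₁(x) + λ₂(y) : λ = λ₁ + λ₂ }`. -/
noncomputable def hatInf (x y : S) (l : S → ℝ≥0∞) : ℝ≥0∞ :=
  sInf {t : ℝ≥0∞ | ∃ l₁ l₂ : S → ℝ≥0∞, IsFunctional l₁ ∧ IsFunctional l₂ ∧
    (∀ u : S, l u = l₁ u + l₂ u) ∧ t = l₁ x + l₂ y}

/-- Edwards' condition for the functional `l`. -/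
def EdwardsFor (l : S → ℝ≥0∞) : Prop := ∀ x y : S,
  hatInf x y l = sSup {t : ℝ≥0∞ | ∃ z : S, z ≤ x ∧ z ≤ y ∧ t = l z}

/-- The ideal generated by a subset. -/
def idealGen (X : Set S) : Set S := ⋂₀ {J : Set S | IsIdeal J ∧ X ⊆ J}

end CuFormal

/-! Choose a `≪`-increasing sequence `pₙ` below `x` and `y` with `λ(pₙ₊₁) > Mₙ`, where
`Mₙ ↑ σ := (x̂ ∧ ŷ)(λ)`; its supremum `z` satisfies `z ≤ x, y` and `λ(z) ≥ σ`, while Edwards'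
condition gives `λ(z) ≤ σ`. To push `λ(p)` above `M < σ` when `λ(q) ≤ M` for the current
`p ≪ q`, fix `δ > 0` with `M + δ < σ`, pick `r ≪ r' ≤ q` above `p` with `λ(q) ≤ λ(r) + δ`
(possible as `λ(q)` is finite), and use O5 to write `r + a ≤ x ≤ r' + a` and
`r + b ≤ y ≤ r' + b`. Then `σ ≤ λ(r') + (â ∧ b̂)(λ)`, so Edwards' condition for `a, b` yields
`w ≤ a, b` with `M + δ < λ(r') + λ(w) ≤ λ(r + w) + δ`, and `r + w ≤ x, y`. -/

theorem exists_seq_of_forall_exists_succ {α : Type*} {P : α → Prop} {R : ℕ → α → α → Prop}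
    {a : α} (ha : P a) (h : ∀ n s, P s → ∃ s', P s' ∧ R n s s') :
    ∃ f : ℕ → α, f 0 = a ∧ ∀ n, P (f n) ∧ R n (f n) (f (n + 1)) := by
  choose! g hgP hgR using h
  let f : ℕ → α := fun n => Nat.rec a (fun k s => g k s) n
  have hfP : ∀ n, P (f n) := fun n => by
    induction n with
    | zero => exact ha
    | succ k ih => exact hgP k (f k) ih
  exact ⟨f, rfl, fun n => ⟨hfP n, hgR n (f n) (hfP n)⟩⟩

namespace CuFormal

section WayBelow

variable {S : Type*} [PartialOrder S] {a b c : S}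

theorem WayBelow.le (h : WayBelow a b) : a ≤ b := by
  have hlub : IsLUB (Set.range fun _ : ℕ => b) b := by
    simpa only [Set.range_const] using isLUB_singleton
  exact (h (fun _ => b) monotone_const b hlub le_rfl).choose_spec

theorem WayBelow.trans_le (hab : WayBelow a b) (hbc : b ≤ c) : WayBelow a c :=
  fun f hf s hs hcs => hab f hf s hs (hbc.trans hcs)

theorem wayBelow_of_le_of_wayBelow (hab : a ≤ b) (hbc : WayBelow b c) : WayBelow a c :=
  fun f hf s hs hcs => (hbc f hf s hs hcs).imp fun _ hn => hab.trans hn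

end WayBelow

variable {S : Type*} [AddCommMonoid S] [PartialOrder S]

theorem wayBelow_zero (hpos : PosOrdered (S := S)) (a : S) : WayBelow (0 : S) a :=
  fun f _ _ _ _ => ⟨0, hpos.1 (f 0)⟩

theorem AxO5.exists_add_le_le_add (hO5 : AxO5 (S := S)) (hpos : PosOrdered (S := S))
    {x' x y : S} (hx' : WayBelow x' x) (hxy : x ≤ y) : ∃ z, x' + z ≤ y ∧ y ≤ x + z := by
  obtain ⟨z, hz, hz', -⟩ :=
    hO5 x' x y 0 0 hx' hxy (wayBelow_zero hpos 0) (by rwa [add_zero])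
  exact ⟨z, hz, hz'⟩

section Functional

variable {l : S → ℝ≥0∞}

theorem exists_wayBelow_wayBelow_lt_add (hO2 : AxO2 (S := S)) (hl : IsFunctional l)
    {p v : S} (hpv : WayBelow p v) {t s : ℝ≥0∞} (ht : t < l v + s) :
    ∃ r r', WayBelow p r ∧ WayBelow r r' ∧ r' ≤ v ∧ t < l r + s := by
  obtain ⟨c, hc, hcc, hcv⟩ := hO2 v
  obtain ⟨k₀, hk₀⟩ := hpv c hc v hcv le_rfl
  rw [hl.2.2.2 c hc v hcv, ENNReal.iSup_add] at ht
  obtain ⟨k₁, hk₁⟩ := lt_iSup_iff.mp ht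
  set K := max k₁ (k₀ + 1)
  refine ⟨c K, c (K + 1), ?_, hcc K, hcv.1 ⟨K + 1, rfl⟩, ?_⟩
  · exact wayBelow_of_le_of_wayBelow hk₀ ((hcc k₀).trans_le (hc (le_max_right _ _)))
  · exact hk₁.trans_le (add_le_add_left (hl.2.2.1 (hc (le_max_left _ _))) s)

theorem hatInf_le_add_hatInf {x y r a b : S} (hx : x ≤ r + a) (hy : y ≤ r + b) :
    hatInf x y l ≤ l r + hatInf a b l := by
  refine (le_iInf₂ ?_).trans_eq ENNReal.add_sInf.symm
  rintro _ ⟨l₁, l₂, hl₁, hl₂, hsum, rfl⟩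
  calc hatInf x y l ≤ l₁ x + l₂ y := sInf_le ⟨l₁, l₂, hl₁, hl₂, hsum, rfl⟩
    _ ≤ (l₁ r + l₁ a) + (l₂ r + l₂ b) :=
      add_le_add ((hl₁.2.2.1 hx).trans_eq (hl₁.2.1 r a)) ((hl₂.2.2.1 hy).trans_eq (hl₂.2.1 r b))
    _ = l r + (l₁ a + l₂ b) := by rw [hsum]; ring

theorem EdwardsFor.le_hatInf (hEd : EdwardsFor l) {x y z : S} (hzx : z ≤ x) (hzy : z ≤ y) :
    l z ≤ hatInf x y l := by
  rw [hEd x y]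
  exact le_sSup ⟨z, hzx, hzy, rfl⟩

theorem EdwardsFor.exists_lt_add (hEd : EdwardsFor l) (hpos : PosOrdered (S := S))
    {a b : S} {r t : ℝ≥0∞} (ht : t < r + hatInf a b l) :
    ∃ w, w ≤ a ∧ w ≤ b ∧ t < r + l w := by
  have hne : {t | ∃ z, z ≤ a ∧ z ≤ b ∧ t = l z}.Nonempty := ⟨l 0, 0, hpos.1 a, hpos.1 b, rfl⟩
  rw [hEd a b, ENNReal.add_sSup hne] at ht
  obtain ⟨_, ⟨w, hwa, hwb, rfl⟩, hw⟩ := lt_biSup_iff.mp ht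
  exact ⟨w, hwa, hwb, hw⟩

theorem exists_wayBelow_le_lt (hpos : PosOrdered (S := S)) (hO2 : AxO2 (S := S))
    (hO5 : AxO5 (S := S)) (hl : IsFunctional l) (hEd : EdwardsFor l) {x y p q : S}
    (hpq : WayBelow p q) (hqx : q ≤ x) (hqy : q ≤ y) {M : ℝ≥0∞} (hM : M < hatInf x y l) :
    ∃ v, WayBelow p v ∧ v ≤ x ∧ v ≤ y ∧ M < l v := by
  by_cases hMq : M < l q
  · exact ⟨q, hpq, hqx, hqy, hMq⟩
  push Not at hMq
  obtain ⟨δ, hδ, hMδ⟩ := ENNReal.lt_iff_exists_add_pos_lt.mp hM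
  have hlq : l q ≠ ⊤ := ne_top_of_le_ne_top (hM.trans_le le_top).ne hMq
  obtain ⟨r, r', hpr, hrr', hr'q, hqr⟩ := exists_wayBelow_wayBelow_lt_add hO2 hl hpq
    (ENNReal.lt_add_right hlq (ENNReal.coe_ne_zero.mpr hδ.ne'))
  obtain ⟨a, hrax, hxa⟩ := hO5.exists_add_le_le_add hpos hrr' (hr'q.trans hqx)
  obtain ⟨b, hrby, hyb⟩ := hO5.exists_add_le_le_add hpos hrr' (hr'q.trans hqy)
  obtain ⟨w, hwa, hwb, hw⟩ :=
    hEd.exists_lt_add hpos (hMδ.trans_le (hatInf_le_add_hatInf hxa hyb))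
  refine ⟨r + w, hpr.trans_le ?_, (hpos.2 r w a hwa).trans hrax,
    (hpos.2 r w b hwb).trans hrby, ?_⟩
  · simpa only [add_zero] using hpos.2 r 0 w (hpos.1 w)
  · refine (ENNReal.add_lt_add_iff_right (ENNReal.coe_ne_top (r := δ))).mp ?_
    calc M + δ < l r' + l w := hw
      _ ≤ l q + l w := add_le_add_left (hl.2.2.1 hr'q) _
      _ ≤ l r + δ + l w := add_le_add_left hqr.le _
      _ = l (r + w) + δ := by rw [hl.2.1]; ring

theorem exists_wayBelow_wayBelow_le_lt (hpos : PosOrdered (S := S)) (hO2 : AxO2 (S := S))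
    (hO5 : AxO5 (S := S)) (hl : IsFunctional l) (hEd : EdwardsFor l) {x y p q : S}
    (hpq : WayBelow p q) (hqx : q ≤ x) (hqy : q ≤ y) {M : ℝ≥0∞} (hM : M < hatInf x y l) :
    ∃ r r', WayBelow p r ∧ WayBelow r r' ∧ r' ≤ x ∧ r' ≤ y ∧ M < l r := by
  obtain ⟨v, hpv, hvx, hvy, hMv⟩ := exists_wayBelow_le_lt hpos hO2 hO5 hl hEd hpq hqx hqy hM
  obtain ⟨r, r', hpr, hrr', hr'v, hMr⟩ :=
    exists_wayBelow_wayBelow_lt_add hO2 hl hpv (s := 0) (by rwa [add_zero])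
  exact ⟨r, r', hpr, hrr', hr'v.trans hvx, hr'v.trans hvy, by rwa [add_zero] at hMr⟩

theorem exists_wayBelow_le_hatInf_eq (hCu : CuSemigroup (S := S)) (hO5 : AxO5 (S := S))
    (hl : IsFunctional l) (hEd : EdwardsFor l) {x y z₀' z₀ : S} (hz₀' : WayBelow z₀' z₀)
    (hz₀x : z₀ ≤ x) (hz₀y : z₀ ≤ y) :
    ∃ z, WayBelow z₀' z ∧ z ≤ x ∧ z ≤ y ∧ hatInf x y l = l z := by
  obtain ⟨hpos, hO1, hO2, -, -⟩ := hCu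
  rcases eq_zero_or_pos (hatInf x y l) with hσ | hσ
  · exact ⟨z₀, hz₀', hz₀x, hz₀y, le_antisymm (hσ ▸ zero_le) (hσ ▸ hEd.le_hatInf hz₀x hz₀y)⟩
  obtain ⟨M, hMmono, hMlt, hMσ⟩ := exists_seq_strictMono_tendsto' hσ
  obtain ⟨f, hf0, hf⟩ := exists_seq_of_forall_exists_succ
    (P := fun s : S × S => WayBelow s.1 s.2 ∧ s.2 ≤ x ∧ s.2 ≤ y)
    (R := fun n s s' => WayBelow s.1 s'.1 ∧ M n < l s'.1) (a := (z₀', z₀)) ⟨hz₀', hz₀x, hz₀y⟩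
    fun n s ⟨hs, hsx, hsy⟩ => by
      obtain ⟨r, r', hsr, hrr', hr'x, hr'y, hMr⟩ :=
        exists_wayBelow_wayBelow_le_lt hpos hO2 hO5 hl hEd hs hsx hsy (hMlt n).2
      exact ⟨(r, r'), ⟨hrr', hr'x, hr'y⟩, hsr, hMr⟩
  have hp : Monotone fun n => (f n).1 := monotone_nat_of_le_succ fun n => (hf n).2.1.le
  obtain ⟨z, hz⟩ := hO1 _ hp
  have hzx : z ≤ x := hz.2 <| Set.forall_mem_range.mpr fun n => (hf n).1.1.le.trans (hf n).1.2.1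
  have hzy : z ≤ y := hz.2 <| Set.forall_mem_range.mpr fun n => (hf n).1.1.le.trans (hf n).1.2.2
  refine ⟨z, ?_, hzx, hzy, le_antisymm ?_ (hEd.le_hatInf hzx hzy)⟩
  · have h₀ := (hf 0).2.1
    rw [hf0] at h₀
    exact h₀.trans_le (hz.1 ⟨1, rfl⟩)
  · rw [hl.2.2.2 _ hp z hz, ← iSup_eq_of_tendsto hMmono.monotone hMσ]
    exact iSup_le fun n => le_iSup_of_le (n + 1) (hf n).2.2.le

end Functional

theorem stmt15_general {S : Type*} [AddCommMonoid S] [PartialOrder S]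
    (hCu : CuSemigroup (S := S)) (hO5 : AxO5 (S := S))
    (l : S → ℝ≥0∞) (hl : IsFunctional l) (hEd : EdwardsFor l) (x y : S) :
    (∃ z : S, z ≤ x ∧ z ≤ y ∧ hatInf x y l = l z) ∧
    (∀ z₀' z₀ : S, WayBelow z₀' z₀ → z₀ ≤ x → z₀ ≤ y →
      ∃ z : S, WayBelow z₀' z ∧ z ≤ x ∧ z ≤ y ∧ hatInf x y l = l z) := by
  refine ⟨?_, fun z₀' z₀ h h₀x h₀y => exists_wayBelow_le_hatInf_eq hCu hO5 hl hEd h h₀x h₀y⟩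
  obtain ⟨z, -, hzx, hzy, hz⟩ := exists_wayBelow_le_hatInf_eq hCu hO5 hl hEd
    (wayBelow_zero hCu.1 0) (hCu.1.1 x) (hCu.1.1 y)
  exact ⟨z, hzx, hzy, hz⟩

/-- the supremum in Edwards' condition is attained, and can moreover be
attained above any `z₀' ≪ z₀ ≤ x, y`. -/
theorem stmt15 {S : Type*} [AddCommMonoid S] [PartialOrder S]
    (hCu : CuSemigroup (S := S)) (hO5 : AxO5 (S := S)) (hO6 : AxO6 (S := S))
    (l : S → ℝ≥0∞) (hl : IsFunctional l) (hEd : EdwardsFor l) (x y : S) :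
    (∃ z : S, z ≤ x ∧ z ≤ y ∧ hatInf x y l = l z) ∧
    (∀ z₀' z₀ : S, WayBelow z₀' z₀ → z₀ ≤ x → z₀ ≤ y →
      ∃ z : S, WayBelow z₀' z ∧ z ≤ x ∧ z ≤ y ∧ hatInf x y l = l z) :=
  stmt15_general hCu hO5 l hl hEd x y

end CuFormal
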